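/- arXiv:1512.01448 — 4 statements merged into one kernel-verified Lean document; each statement's English description precedes it below -/
import Mathlib

section
/- Let D be a digraph on vertex set V = {1,…,n} and let q ≥ 3. Then the maximum of |Im(f)| over all f ∈ F[D,q] equals the maximum of |Im(f)| over all f ∈ F(D,q), and both equal q^{α_1(D)}. -/
open Function

/-- A `p`-walk in the digraph `D` on vertex set `Fin n`. -/
def IsPWalk {n : ℕ} (D : Fin n → Fin n → Prop) (p : ℕ) (w : Fin (p + 1) → Fin n) : Prop :=
  ∀ s : Fin p, D (w s.castSucc) (w s.succ)

/-- `alphaWalks D p` is the maximum number of pairwise independent `p`-walks in `D`. -/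
noncomputable def alphaWalks {n : ℕ} (D : Fin n → Fin n → Prop) (p : ℕ) : ℕ :=
  sSup {k : ℕ | ∃ W : Fin k → Fin (p + 1) → Fin n,
    (∀ i, IsPWalk D p (W i)) ∧ ∀ i j : Fin k, i ≠ j → ∀ s, W i s ≠ W j s}

/-- The interaction graph of an FDS: `(u,v)` is an arc iff `f_v` depends essentially on `x_u`. -/
def IG {n q : ℕ} (f : (Fin n → Fin q) → Fin n → Fin q) (u v : Fin n) : Prop :=
  ∃ x y : Fin n → Fin q, (∀ w : Fin n, w ≠ u → x w = y w) ∧ f x v ≠ f y v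

/-- Membership in `F[D,q]`: the interaction graph of `f` equals `D`. -/
def ExactIG {n q : ℕ} (D : Fin n → Fin n → Prop) (f : (Fin n → Fin q) → Fin n → Fin q) : Prop :=
  ∀ u v, IG f u v ↔ D u v

/-- Membership in `F(D,q)`: the interaction graph of `f` is contained in `D`. -/
def SubIG {n q : ℕ} (D : Fin n → Fin n → Prop) (f : (Fin n → Fin q) → Fin n → Fin q) : Prop :=
  ∀ u v, IG f u v → D u v

/-- A cycle of `D`, given by its list of (distinct) vertices, with arcs between consecutive
vertices, cyclically. A loop is a cycle with one vertex. -/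
def IsCycleList {n : ℕ} (D : Fin n → Fin n → Prop) (c : List (Fin n)) : Prop :=
  c ≠ [] ∧ c.Nodup ∧
    ∀ i : Fin c.length, D (c.get i) (c.get ⟨((i : ℕ) + 1) % c.length, Nat.mod_lt _ i.pos⟩)

/-- A path of `D`, given by its list of (distinct) vertices. -/
def IsPathList {n : ℕ} (D : Fin n → Fin n → Prop) (P : List (Fin n)) : Prop :=
  P.Nodup ∧ P.Chain' D

/-- `f^{(S)}`: update the coordinates in `S` only. -/
def applyBlock {n q : ℕ} (f : (Fin n → Fin q) → Fin n → Fin q) (S : Finset (Fin n))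
    (x : Fin n → Fin q) : Fin n → Fin q :=
  fun v => if v ∈ S then f x v else x v

/-- `f^σ = f^{(σ_t)} ∘ ⋯ ∘ f^{(σ_1)}`. -/
def applySchedule {n q : ℕ} (f : (Fin n → Fin q) → Fin n → Fin q)
    (σ : List (Finset (Fin n))) : (Fin n → Fin q) → Fin n → Fin q :=
  σ.foldl (fun g S => applyBlock f S ∘ g) id

/-- A block-sequential schedule: every vertex is updated exactly once. -/
def BlockSequential {n : ℕ} (σ : List (Finset (Fin n))) : Prop :=
  σ.Pairwise Disjoint ∧ ∀ v : Fin n, ∃ S ∈ σ, v ∈ S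

/-- A complete schedule: every vertex is updated at least once. -/
def CompleteSchedule {n : ℕ} (σ : List (Finset (Fin n))) : Prop :=
  ∀ v : Fin n, ∃ S ∈ σ, v ∈ S

/-- `T(D)`: the number of trivial strong components of `D`, i.e. the number of
vertices not lying on any cycle of `D`. -/
noncomputable def numTrivial {n : ℕ} (D : Fin n → Fin n → Prop) : ℕ :=
  Set.ncard {v : Fin n | ¬ ∃ c : List (Fin n), IsCycleList D c ∧ v ∈ c}

/-- All vertices of `D` can be covered by pairwise vertex-disjoint cycles. -/
def CoveredByDisjointCycles {n : ℕ} (D : Fin n → Fin n → Prop) : Prop :=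
  ∃ Cs : List (List (Fin n)), (∀ c ∈ Cs, IsCycleList D c) ∧
    Cs.Pairwise (fun a b => ∀ v ∈ a, v ∉ b) ∧ ∀ v : Fin n, ∃ c ∈ Cs, v ∈ c

/-!
The upper bound is König's theorem in disguise: a maximum family of independent 1-walks is a
maximum matching of the bipartite double cover of `D`, so there are `A, B` with
`#A + #B = α₁(D)` such that every arc leaves `A` or enters `B`. For `w ∉ B`, `f_w` only reads
coordinates in `A`, so `f x` is determined by `x` on `A` and `f x` on `B`, whence
`|Im f| ≤ q ^ (#A + #B)`. For the lower bound, `matchingFDS` along a maximum matching has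
interaction graph exactly `D` and is injective on the configurations supported on the matched tails.
-/
open Finset

theorem dependsOn_of_update_eq {ι β : Type*} [Finite ι] [DecidableEq ι] {α : ι → Type*}
    {g : (Π i, α i) → β} {s : Set ι}
    (h : ∀ i ∉ s, ∀ (x : Π i, α i) (a : α i), g (update x i a) = g x) : DependsOn g s := by
  have key : ∀ (t : Finset ι) (x y : Π i, α i), (∀ i ∈ t, i ∉ s) → (∀ i ∉ t, x i = y i) →
      g x = g y := by
    intro t
    induction t using Finset.induction_on with
    | empty => exact fun x y _ hxy => congrArg g (funext fun i => hxy i (notMem_empty i))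
    | @insert i t hi ih =>
      intro x y hts hxy
      rw [← h i (hts i (mem_insert_self i t)) x (y i)]
      refine ih _ y (fun j hj => hts j (mem_insert_of_mem hj)) fun j hj => ?_
      rcases eq_or_ne j i with rfl | hji
      · exact update_self ..
      · rw [update_of_ne hji]
        exact hxy j (by simp [hji, hj])
  have := Fintype.ofFinite ι
  classical
  intro x y hxy
  exact key (univ.filter (· ∉ s)) x y (fun i hi => (mem_filter.1 hi).2)
    fun i hi => hxy i (by simpa using hi)

theorem update_eq_of_not_IG {n q : ℕ} {f : (Fin n → Fin q) → Fin n → Fin q} {u v : Fin n}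
    (h : ¬ IG f u v) (x : Fin n → Fin q) (a : Fin q) : f (update x u a) v = f x v :=
  not_ne_iff.1 fun hne => h ⟨_, _, fun _ hw => update_of_ne hw a x, hne⟩

theorem dependsOn_of_not_IG {n q : ℕ} {f : (Fin n → Fin q) → Fin n → Fin q} {v : Fin n}
    {s : Set (Fin n)} (h : ∀ u ∉ s, ¬ IG f u v) : DependsOn (f · v) s :=
  dependsOn_of_update_eq fun u hu => update_eq_of_not_IG (h u hu)

theorem Nat.card_range_le_of_factorsThrough {α β γ : Type*} [Finite γ] {f : α → β} {φ : α → γ}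
    (h : FactorsThrough f φ) : Nat.card (Set.range f) ≤ Nat.card γ := by
  refine Nat.card_le_card_of_injective (φ ∘ Set.rangeSplitting f) fun y y' hyy' => ?_
  have := h hyy'
  rwa [Set.apply_rangeSplitting f, Set.apply_rangeSplitting f, SetCoe.ext_iff] at this

theorem card_range_le_of_cover {n q : ℕ} {D : Fin n → Fin n → Prop}
    {f : (Fin n → Fin q) → Fin n → Fin q} (hf : SubIG D f) {A B : Finset (Fin n)}
    (hcov : ∀ u v, D u v → u ∈ A ∨ v ∈ B) :
    Nat.card (Set.range f) ≤ q ^ (#A + #B) := by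
  calc Nat.card (Set.range f)
      ≤ Nat.card ((A → Fin q) × (B → Fin q)) :=
        Nat.card_range_le_of_factorsThrough (φ := fun x => (A.restrict x, B.restrict (f x))) ?_
    _ = q ^ (#A + #B) := by simp [pow_add]
  intro x y hxy
  simp only [Prod.ext_iff, funext_iff, Finset.restrict, Subtype.forall] at hxy
  funext w
  by_cases hw : w ∈ B
  · exact hxy.2 w hw
  · refine dependsOn_of_not_IG (s := A) (fun u hu hIG => ?_) hxy.1
    exact (hcov u w (hf u w hIG)).elim hu hw

theorem Finset.exists_injective_of_card_le_card_biUnion_add {ι α : Type*} [Fintype ι]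
    [DecidableEq α] (t : ι → Finset α) (d : ℕ) (h : ∀ s : Finset ι, #s ≤ #(s.biUnion t) + d) :
    ∃ s : Finset ι, Fintype.card ι ≤ #s + d ∧ ∃ g : s → α, Injective g ∧ ∀ i : s, g i ∈ t i := by
  classical
  -- Hall's theorem after giving every `i` the same `d` extra neighbours.
  obtain ⟨g, hg, hgt⟩ := (all_card_le_biUnion_card_iff_exists_injective
      fun i => (t i).disjSum (univ : Finset (Fin d))).1 fun s => by
    rcases s.eq_empty_or_nonempty with rfl | ⟨i, hi⟩
    · simp
    have hcard : #((s.biUnion t).disjSum (univ : Finset (Fin d))) = #(s.biUnion t) + d := by simp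
    refine (h s).trans (hcard ▸ card_le_card fun x hx => ?_)
    simp only [mem_biUnion]
    rcases x with a | b
    · obtain ⟨j, hj, ha⟩ := mem_biUnion.1 (inl_mem_disjSum.1 hx)
      exact ⟨j, hj, inl_mem_disjSum.2 ha⟩
    · exact ⟨i, hi, inr_mem_disjSum.2 (mem_univ b)⟩
  let s := univ.filter fun i => (g i).isLeft
  have hcompl : #sᶜ ≤ d := by
    calc #sᶜ ≤ #((univ : Finset (Fin d)).map Embedding.inr) :=
          card_le_card_of_injOn g (fun i hi => ?_) hg.injOn
      _ = d := by simp
    obtain ⟨b, hb⟩ := Sum.isRight_iff.1 (Sum.not_isLeft.1 (by simpa [s] using hi))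
    simp [hb]
  refine ⟨s, by rw [← card_add_card_compl s]; omega,
    fun i => (g i).getLeft (mem_filter.1 i.2).2, fun i j hij => Subtype.ext (hg ?_), fun i => ?_⟩
  · rw [← Sum.inl_getLeft (g i) (mem_filter.1 i.2).2, ← Sum.inl_getLeft (g j) (mem_filter.1 j.2).2]
    exact congrArg Sum.inl hij
  · have := hgt i
    rwa [← Sum.inl_getLeft (g i) (mem_filter.1 i.2).2, inl_mem_disjSum] at this

theorem exists_independent_one_walks_iff {n k : ℕ} (D : Fin n → Fin n → Prop) :
    (∃ W : Fin k → Fin (1 + 1) → Fin n,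
      (∀ i, IsPWalk D 1 (W i)) ∧ ∀ i j : Fin k, i ≠ j → ∀ s, W i s ≠ W j s) ↔
    ∃ u v : Fin k → Fin n, Injective u ∧ Injective v ∧ ∀ i, D (u i) (v i) := by
  constructor
  · rintro ⟨W, hW, hind⟩
    exact ⟨(W · 0), (W · 1), fun i j hij => by_contra fun hne => hind i j hne 0 hij,
      fun i j hij => by_contra fun hne => hind i j hne 1 hij, fun i => hW i 0⟩
  · rintro ⟨u, v, hu, hv, hD⟩
    refine ⟨fun i => ![u i, v i], fun i s => ?_, fun i j hij s => ?_⟩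
    · simpa [Subsingleton.elim s 0] using hD i
    · fin_cases s
      exacts [hu.ne hij, hv.ne hij]

theorem alphaWalks_one_eq {n : ℕ} (D : Fin n → Fin n → Prop) :
    alphaWalks D 1 =
      sSup {k | ∃ u v : Fin k → Fin n, Injective u ∧ Injective v ∧ ∀ i, D (u i) (v i)} := by
  simp only [alphaWalks, exists_independent_one_walks_iff]

theorem bddAbove_matching_sizes {n : ℕ} (D : Fin n → Fin n → Prop) :
    BddAbove {k | ∃ u v : Fin k → Fin n, Injective u ∧ Injective v ∧ ∀ i, D (u i) (v i)} :=
  ⟨n, fun _ ⟨u, _, hu, _⟩ => by simpa using Fintype.card_le_of_injective u hu⟩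

theorem card_le_alphaWalks_one {n : ℕ} {D : Fin n → Fin n → Prop} {κ : Type*} [Fintype κ]
    {u v : κ → Fin n} (hu : Injective u) (hv : Injective v) (hD : ∀ i, D (u i) (v i)) :
    Fintype.card κ ≤ alphaWalks D 1 := by
  rw [alphaWalks_one_eq]
  let e := (Fintype.equivFin κ).symm
  exact le_csSup (bddAbove_matching_sizes D)
    ⟨u ∘ e, v ∘ e, hu.comp e.injective, hv.comp e.injective, fun i => hD (e i)⟩

theorem exists_matching_card_alphaWalks_one {n : ℕ} (D : Fin n → Fin n → Prop) :
    ∃ u v : Fin (alphaWalks D 1) → Fin n, Injective u ∧ Injective v ∧ ∀ i, D (u i) (v i) := by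
  rw [alphaWalks_one_eq]
  refine Nat.sSup_mem ⟨0, ?_⟩ (bddAbove_matching_sizes D)
  exact ⟨finZeroElim, finZeroElim, fun i => i.elim0, fun i => i.elim0, fun i => i.elim0⟩

theorem exists_cover_card_le_alphaWalks_one {n : ℕ} (D : Fin n → Fin n → Prop) :
    ∃ A B : Finset (Fin n), (∀ u v, D u v → u ∈ A ∨ v ∈ B) ∧ #A + #B ≤ alphaWalks D 1 := by
  classical
  let N : Fin n → Finset (Fin n) := fun u => univ.filter (D u)
  -- A set `S₀` of maximal deficiency `#S₀ - #N(S₀)` yields both a cover and a matching.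
  obtain ⟨S₀, hS₀⟩ := Finite.exists_max fun S : Finset (Fin n) => (#S : ℤ) - #(S.biUnion N)
  have hempty := hS₀ ∅
  simp only [card_empty, biUnion_empty, Nat.cast_zero, sub_self] at hempty
  obtain ⟨s, hs, v, hv, hvN⟩ := exists_injective_of_card_le_card_biUnion_add N
    (#S₀ - #(S₀.biUnion N)) fun S => by have := hS₀ S; omega
  have hmatch := card_le_alphaWalks_one Subtype.val_injective hv fun i => (mem_filter.1 (hvN i)).2
  refine ⟨S₀ᶜ, S₀.biUnion N, fun u w huw => ?_, ?_⟩
  · by_cases hu : u ∈ S₀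
    · exact Or.inr (mem_biUnion.2 ⟨u, hu, by simpa [N] using huw⟩)
    · exact Or.inl (mem_compl.2 hu)
  · have := card_add_card_compl S₀
    simp only [Fintype.card_coe, Fintype.card_fin] at this hs hmatch
    omega

open Classical in
/-- `p w` is the tail matched to `w`, whose state `w` copies. The transposition `a ↔ b`, triggered
by any other in-neighbour in the marker state `c`, makes every arc essential; as it fixes `c`, the
marker positions, and then the copied states, can be read back from the image. -/
noncomputable def matchingFDS {n q : ℕ} (D : Fin n → Fin n → Prop) (p : Fin n → Option (Fin n))
    (a b c : Fin q) (x : Fin n → Fin q) (w : Fin n) : Fin q :=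
  if ∃ y, D y w ∧ p w ≠ some y ∧ x y = c then Equiv.swap a b ((p w).elim a x) else (p w).elim a x

section matchingFDS

variable {n q : ℕ} {D : Fin n → Fin n → Prop} {p : Fin n → Option (Fin n)} {a b c : Fin q}

theorem matchingFDS_congr (hp : ∀ w y, p w = some y → D y w) {x x' : Fin n → Fin q} {w : Fin n}
    (hxx' : ∀ y, D y w → x y = x' y) :
    matchingFDS D p a b c x w = matchingFDS D p a b c x' w := by
  have hbase : (p w).elim a x = (p w).elim a x' := by
    cases hpw : p w with
    | none => rfl
    | some y => exact hxx' y (hp w y hpw)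
  have hflag : (∃ y, D y w ∧ p w ≠ some y ∧ x y = c) ↔ (∃ y, D y w ∧ p w ≠ some y ∧ x' y = c) :=
    exists_congr fun y => and_congr_right fun hy => by rw [hxx' y hy]
  simp only [matchingFDS, hbase]
  congr 1
  exact propext hflag

theorem IG_matchingFDS (hab : a ≠ b) (hac : a ≠ c) {u w : Fin n} (huw : D u w) :
    IG (matchingFDS D p a b c) u w := by
  have hconst : matchingFDS D p a b c (fun _ => a) w = a := by
    have : ¬ ∃ y, D y w ∧ p w ≠ some y ∧ a = c := fun ⟨_, _, _, h⟩ => hac h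
    simp only [matchingFDS, if_neg this]
    cases p w <;> rfl
  by_cases hpw : p w = some u
  · refine ⟨fun _ => a, update (fun _ => a) u b, fun y hy => (update_of_ne hy b fun _ => a).symm, ?_⟩
    have : ¬ ∃ y, D y w ∧ p w ≠ some y ∧ update (fun _ => a) u b y = c := by
      rintro ⟨y, -, hy, hyc⟩
      rw [update_of_ne (by rintro rfl; exact hy hpw)] at hyc
      exact hac hyc
    rw [hconst, matchingFDS, if_neg this, hpw, Option.elim_some, update_self]
    exact hab
  · refine ⟨fun _ => a, update (fun _ => a) u c, fun y hy => (update_of_ne hy c fun _ => a).symm, ?_⟩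
    have hflag : ∃ y, D y w ∧ p w ≠ some y ∧ update (fun _ => a) u c y = c :=
      ⟨u, huw, hpw, update_self ..⟩
    have hbase : (p w).elim a (update (fun _ => a) u c) = a := by
      cases hp : p w with
      | none => rfl
      | some y =>
        have hyu : y ≠ u := by rintro rfl; exact hpw hp
        simp [hyu]
    rw [hconst, matchingFDS, if_pos hflag, hbase, Equiv.swap_apply_left]
    exact hab

theorem exactIG_matchingFDS (hp : ∀ w y, p w = some y → D y w) (hab : a ≠ b) (hac : a ≠ c) :
    ExactIG D (matchingFDS D p a b c) := by
  refine fun u w => ⟨fun ⟨x, x', hxx', hne⟩ => by_contra fun huw => hne ?_, IG_matchingFDS hab hac⟩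
  exact matchingFDS_congr hp fun y hy => hxx' y (by rintro rfl; exact huw hy)

theorem matchingFDS_eq_marker_iff (hac : a ≠ c) (hbc : b ≠ c) (x : Fin n → Fin q) (w : Fin n) :
    matchingFDS D p a b c x w = c ↔ (p w).elim a x = c := by
  unfold matchingFDS
  split_ifs
  · rw [Equiv.swap_apply_eq_iff, Equiv.swap_apply_of_ne_of_ne hac.symm hbc.symm]
  · rfl

theorem matchingFDS_base_eq {x x' : Fin n → Fin q} (hxx' : ∀ y, x y = c ↔ x' y = c) {w : Fin n}
    (h : matchingFDS D p a b c x w = matchingFDS D p a b c x' w) :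
    (p w).elim a x = (p w).elim a x' := by
  have hflag : (∃ y, D y w ∧ p w ≠ some y ∧ x y = c) ↔ (∃ y, D y w ∧ p w ≠ some y ∧ x' y = c) :=
    exists_congr fun y => by rw [hxx' y]
  unfold matchingFDS at h
  by_cases hx : ∃ y, D y w ∧ p w ≠ some y ∧ x y = c
  · rw [if_pos hx, if_pos (hflag.1 hx)] at h
    exact (Equiv.swap a b).injective h
  · rwa [if_neg hx, if_neg (mt hflag.2 hx)] at h

theorem pow_le_card_range_matchingFDS (hac : a ≠ c) (hbc : b ≠ c) {k : ℕ} {u v : Fin k → Fin n}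
    (hu : Injective u) (hp : ∀ i, p (v i) = some (u i)) :
    q ^ k ≤ Nat.card (Set.range (matchingFDS D p a b c)) := by
  let e : (Fin k → Fin q) → Fin n → Fin q := fun γ => extend u γ fun _ => a
  have he : ∀ γ i, e γ (u i) = γ i := fun γ => hu.extend_apply γ _
  have hread : ∀ γ i, matchingFDS D p a b c (e γ) (v i) = c ↔ γ i = c := fun γ i => by
    rw [matchingFDS_eq_marker_iff hac hbc, hp i, Option.elim_some, he]
  have hmarker : ∀ γ y, e γ y = c ↔ ∃ i, u i = y ∧ γ i = c := fun γ y => by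
    by_cases hy : ∃ i, u i = y
    · obtain ⟨i, rfl⟩ := hy
      simp [he, hu.eq_iff]
    · simp only [e, extend_apply' _ _ _ hy, hac, false_iff]
      exact fun ⟨i, hi, _⟩ => hy ⟨i, hi⟩
  have hinj : Injective (matchingFDS D p a b c ∘ e) := fun γ γ' h => by
    have h' : matchingFDS D p a b c (e γ) = matchingFDS D p a b c (e γ') := h
    have hc : ∀ i, γ i = c ↔ γ' i = c := fun i => by rw [← hread, ← hread, h']
    funext i
    have := matchingFDS_base_eq (fun y => by simp only [hmarker, hc]) (congrFun h' (v i))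
    rwa [hp i, Option.elim_some, Option.elim_some, he, he] at this
  calc q ^ k = Nat.card (Fin k → Fin q) := by simp
    _ ≤ _ := Nat.card_le_card_of_injective (Set.rangeFactorization (matchingFDS D p a b c) ∘ e)
        fun γ γ' h => hinj (congrArg Subtype.val h :)

end matchingFDS

theorem exists_exactIG_pow_alphaWalks_le_card_range {n q : ℕ} (hq : 3 ≤ q)
    (D : Fin n → Fin n → Prop) :
    ∃ f : (Fin n → Fin q) → Fin n → Fin q,
      ExactIG D f ∧ q ^ alphaWalks D 1 ≤ Nat.card (Set.range f) := by
  obtain ⟨u, v, hu, hv, hD⟩ := exists_matching_card_alphaWalks_one D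
  let p : Fin n → Option (Fin n) := extend v (some ∘ u) fun _ => none
  have hpv : ∀ i, p (v i) = some (u i) := hv.extend_apply _ _
  have hpD : ∀ w y, p w = some y → D y w := by
    intro w y hwy
    by_cases hw : ∃ i, v i = w
    · obtain ⟨i, rfl⟩ := hw
      obtain rfl := Option.some_inj.1 ((hpv i).symm.trans hwy)
      exact hD i
    · simp [p, extend_apply' _ _ _ hw] at hwy
  let a : Fin q := ⟨0, by omega⟩
  let b : Fin q := ⟨1, by omega⟩
  let c : Fin q := ⟨2, by omega⟩
  have hab : a ≠ b := by simp [a, b, Fin.ext_iff]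
  have hac : a ≠ c := by simp [a, c, Fin.ext_iff]
  have hbc : b ≠ c := by simp [b, c, Fin.ext_iff]
  exact ⟨matchingFDS D p a b c, exactIG_matchingFDS hpD hab hac,
    pow_le_card_range_matchingFDS hac hbc hu hpv⟩

theorem ExactIG.subIG {n q : ℕ} {D : Fin n → Fin n → Prop}
    {f : (Fin n → Fin q) → Fin n → Fin q} (hf : ExactIG D f) : SubIG D f :=
  fun u v => (hf u v).1

theorem max_rank_general {n q : ℕ} (hq : 3 ≤ q) (D : Fin n → Fin n → Prop) :
    IsGreatest {r : ℕ | ∃ f : (Fin n → Fin q) → Fin n → Fin q,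
        ExactIG D f ∧ r = Nat.card (Set.range f)} (q ^ alphaWalks D 1) ∧
    IsGreatest {r : ℕ | ∃ f : (Fin n → Fin q) → Fin n → Fin q,
        SubIG D f ∧ r = Nat.card (Set.range f)} (q ^ alphaWalks D 1) := by
  obtain ⟨A, B, hcov, hAB⟩ := exists_cover_card_le_alphaWalks_one D
  have upper : ∀ f, SubIG D f → Nat.card (Set.range f) ≤ q ^ alphaWalks D 1 := fun f hf =>
    (card_range_le_of_cover hf hcov).trans (Nat.pow_le_pow_right (by omega) hAB)
  obtain ⟨f, hf, hfq⟩ := exists_exactIG_pow_alphaWalks_le_card_range hq D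
  have hcard : q ^ alphaWalks D 1 = Nat.card (Set.range f) := (upper f hf.subIG).antisymm' hfq
  exact ⟨⟨⟨f, hf, hcard⟩, fun _ ⟨g, hg, hr⟩ => hr ▸ upper g hg.subIG⟩,
    ⟨⟨f, hf.subIG, hcard⟩, fun _ ⟨g, hg, hr⟩ => hr ▸ upper g hg⟩⟩

/-- for `q ≥ 3`, the maximum of `|Im(f)|` over `F[D,q]` and the maximum over
`F(D,q)` both equal `q ^ α_1(D)`. -/
theorem max_rank {n q : ℕ} (hn : 1 ≤ n) (hq : 3 ≤ q) (D : Fin n → Fin n → Prop) :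
    IsGreatest {r : ℕ | ∃ f : (Fin n → Fin q) → Fin n → Fin q,
        ExactIG D f ∧ r = Nat.card (Set.range f)} (q ^ alphaWalks D 1) ∧
    IsGreatest {r : ℕ | ∃ f : (Fin n → Fin q) → Fin n → Fin q,
        SubIG D f ∧ r = Nat.card (Set.range f)} (q ^ alphaWalks D 1) :=
  max_rank_general hq D
end

section
/- Let D be a digraph on vertex set V = {1,…,n} and let q ≥ 3. There exists f ∈ F[D,q] that is a permutation (bijection) of [q]^n if and only if all the vertices of D can be covered by pairwise vertex-disjoint cycles of D. -/
open Function

/-!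
If `f` is a bijection with interaction graph `D`, the coordinates of `f` in a set `S` of vertices
depend only on the in-neighbours `N⁻(S)` and still take every value in `[q]^S`, so
`q^|S| ≤ q^|N⁻(S)|`. This is Hall's condition, which yields a permutation `ρ` with an arc
`v → ρ v` for every `v`; the orbits of `ρ` are pairwise disjoint cycles covering `D`.

Conversely, disjoint covering cycles give such a `ρ`. For three distinct values `a b c`, let `v`
copy its predecessor `ρ⁻¹ v`, swapping `a` and `b` exactly when all other in-neighbours of `v`
carry the marker `c`. The swap fixes `c`, so `f x` determines which coordinates of `x` carry
the marker, hence every swap condition, hence `x`: `f` is injective. Every arc is essential,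
because changing a marked in-neighbour turns the swap off.
-/

section

variable {n q : ℕ}

theorem dependsOn_setOf_IG (f : (Fin n → Fin q) → Fin n → Fin q) (v : Fin n) :
    DependsOn (fun x => f x v) {u | IG f u v} := by
  classical
  suffices h : ∀ s : Finset (Fin n), ∀ x y : Fin n → Fin q, (∀ u ∉ s, x u = y u) →
      (∀ u ∈ s, ¬ IG f u v) → f x v = f y v by
    intro x y hxy
    refine h (Finset.univ.filter fun u => x u ≠ y u) x y (by simp) fun u hu hIG => ?_
    exact (Finset.mem_filter.1 hu).2 (hxy u hIG)
  intro s
  induction s using Finset.induction_on with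
  | empty => exact fun x y hxy _ => congrArg (f · v) (funext fun u => hxy u (by simp))
  | insert a s _ ih =>
    intro x y hxy hs
    have hupd : f x v = f (update x a (y a)) v := by
      by_contra hne
      exact hs a (by simp) ⟨_, _, fun w hw => (update_of_ne hw _ _).symm, hne⟩
    rw [hupd]
    refine ih _ _ (fun u hu => ?_) fun u hu => hs u (by simp [hu])
    rcases eq_or_ne u a with rfl | hua
    · simp
    · rw [update_of_ne hua]; exact hxy u (by simp [hu, hua])

open Classical in
theorem card_le_card_biUnion_inNeighbors (hq : 1 < q) {D : Fin n → Fin n → Prop}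
    {f : (Fin n → Fin q) → Fin n → Fin q} (hD : SubIG D f) (hf : Surjective f)
    (S : Finset (Fin n)) :
    S.card ≤ (S.biUnion fun v => Finset.univ.filter (D · v)).card := by
  set T := S.biUnion fun v => Finset.univ.filter (D · v)
  let extend (A : Finset (Fin n)) (t : A → Fin q) : Fin n → Fin q :=
    fun u => if h : u ∈ A then t ⟨u, h⟩ else ⟨0, by omega⟩
  have hsurj : Surjective fun (t : T → Fin q) (v : S) => f (extend T t) v := by
    intro a
    obtain ⟨x, hx⟩ := hf (extend S a)
    refine ⟨fun u => x u, funext fun v => ?_⟩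
    have hT : ∀ u, IG f u v → u ∈ T := fun u hu =>
      Finset.mem_biUnion.2 ⟨v, v.2, by simpa using hD u v hu⟩
    have hfx : f (extend T fun u => x u) v = f x v :=
      dependsOn_setOf_IG f v fun u hu => by simp [extend, hT u hu]
    change f (extend T fun u => x u) v = a v
    rw [hfx, hx]
    simp [extend]
  have hcard := Fintype.card_le_of_surjective _ hsurj
  simp only [Fintype.card_fun, Fintype.card_coe, Fintype.card_fin] at hcard
  exact (Nat.pow_le_pow_iff_right hq).1 hcard

theorem exists_perm_of_surjective (hq : 1 < q) {D : Fin n → Fin n → Prop}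
    {f : (Fin n → Fin q) → Fin n → Fin q} (hD : SubIG D f) (hf : Surjective f) :
    ∃ ρ : Equiv.Perm (Fin n), ∀ v, D v (ρ v) := by
  classical
  obtain ⟨σ, hσ, hσD⟩ := (Finset.all_card_le_biUnion_card_iff_exists_injective _).1
    (card_le_card_biUnion_inNeighbors hq hD hf)
  let P := Equiv.ofBijective σ (Finite.injective_iff_bijective.1 hσ)
  refine ⟨P.symm, fun v => ?_⟩
  simpa [show σ (P.symm v) = v from P.apply_symm_apply v] using hσD (P.symm v)

theorem IsCycleList.rel_formPerm {D : Fin n → Fin n → Prop} {c : List (Fin n)}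
    (hc : IsCycleList D c) {v : Fin n} (hv : v ∈ c) : D v (c.formPerm v) := by
  obtain ⟨i, rfl⟩ := List.get_of_mem hv
  simpa [List.formPerm_apply_getElem c hc.2.1] using hc.2.2 i

theorem exists_perm_of_coveredByDisjointCycles {D : Fin n → Fin n → Prop}
    (h : CoveredByDisjointCycles D) : ∃ ρ : Equiv.Perm (Fin n), ∀ v, D v (ρ v) := by
  obtain ⟨Cs, hCs, hdisj, hcov⟩ := h
  choose c hcCs hvc using hcov
  have hunique : ∀ {v w}, w ∈ c v → c w = c v := by
    intro v w hw
    by_contra hne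
    have : Std.Symm fun a b : List (Fin n) => ∀ x ∈ a, x ∉ b := ⟨fun _ _ hab x hb ha => hab x ha hb⟩
    exact hdisj.forall (hcCs w) (hcCs v) hne w (hvc w) hw
  let next v := (c v).formPerm v
  have hnext : Injective next := by
    intro a b hab
    have hab' : c a = c b :=
      (hunique (List.formPerm_apply_mem_of_mem (hvc a))).symm.trans
        ((congrArg c hab).trans (hunique (List.formPerm_apply_mem_of_mem (hvc b))))
    exact (c a).formPerm.injective (by simpa only [next, hab'] using hab)
  exact ⟨Equiv.ofBijective next (Finite.injective_iff_bijective.1 hnext),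
    fun v => (hCs _ (hcCs v)).rel_formPerm (hvc v)⟩

-- The list underlying `periodicOrbit ρ v`.
noncomputable def orbitList {α : Type*} (ρ : Equiv.Perm α) (v : α) : List α :=
  (List.range (minimalPeriod ρ v)).map fun k => ρ^[k] v

theorem mem_orbitList_iff {α : Type*} [Finite α] {ρ : Equiv.Perm α} {v w : α} :
    w ∈ orbitList ρ v ↔ ρ.SameCycle v w := by
  rw [← Cycle.mem_coe_iff]
  change w ∈ periodicOrbit ρ v ↔ _
  rw [mem_periodicOrbit_iff (ρ.injective.mem_periodicPts v)]
  constructor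
  · rintro ⟨k, rfl⟩
    exact ⟨k, by simp [Equiv.Perm.coe_pow]⟩
  · intro h
    obtain ⟨k, hk⟩ := h.exists_nat_pow_eq
    exact ⟨k, by simpa [Equiv.Perm.coe_pow] using hk⟩

theorem isCycleList_orbitList {D : Fin n → Fin n → Prop} {ρ : Equiv.Perm (Fin n)}
    (hD : ∀ v, D v (ρ v)) (v : Fin n) : IsCycleList D (orbitList ρ v) := by
  have hpos := minimalPeriod_pos_of_mem_periodicPts (ρ.injective.mem_periodicPts v)
  refine ⟨by simp [orbitList]; omega, Cycle.nodup_coe_iff.1 nodup_periodicOrbit, fun i => ?_⟩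
  simp only [List.get_eq_getElem]
  simp only [orbitList, List.getElem_map, List.getElem_range,
    List.length_map, List.length_range, iterate_mod_minimalPeriod_eq, iterate_succ_apply']
  exact hD _

theorem coveredByDisjointCycles_of_perm {D : Fin n → Fin n → Prop} (ρ : Equiv.Perm (Fin n))
    (hD : ∀ v, D v (ρ v)) : CoveredByDisjointCycles D := by
  classical
  let rep v : Fin n := (Quotient.mk (Equiv.Perm.SameCycle.setoid ρ) v).out
  have hrep v : ρ.SameCycle (rep v) v := Quotient.mk_out (s := Equiv.Perm.SameCycle.setoid ρ) v
  have hrep_eq {v w} (h : ρ.SameCycle v w) : rep v = rep w :=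
    congrArg Quotient.out (Quotient.sound h)
  refine ⟨(Finset.univ.image rep).toList.map (orbitList ρ), ?_, ?_, fun v => ?_⟩
  · simp only [List.mem_map]
    rintro _ ⟨r, -, rfl⟩
    exact isCycleList_orbitList hD r
  · refine List.pairwise_map.2 ((Finset.nodup_toList _).imp_of_mem ?_)
    intro r s hr hs hne w hwr hws
    simp only [Finset.mem_toList, Finset.mem_image] at hr hs
    obtain ⟨a, -, rfl⟩ := hr
    obtain ⟨b, -, rfl⟩ := hs
    rw [mem_orbitList_iff] at hwr hws
    exact hne ((hrep_eq (hrep a)).symm.trans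
      ((hrep_eq (hwr.trans hws.symm)).trans (hrep_eq (hrep b))))
  · exact ⟨orbitList ρ (rep v), by simp, mem_orbitList_iff.2 (hrep v)⟩

open Classical in
noncomputable def markedSwapFDS (D : Fin n → Fin n → Prop) (ρ : Equiv.Perm (Fin n))
    (a b c : Fin q) : (Fin n → Fin q) → Fin n → Fin q :=
  fun x v => if ∀ u, D u v → u ≠ ρ.symm v → x u = c then Equiv.swap a b (x (ρ.symm v))
    else x (ρ.symm v)

section markedSwapFDS

variable {D : Fin n → Fin n → Prop} {ρ : Equiv.Perm (Fin n)} {a b c : Fin q}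

theorem markedSwapFDS_eq_iff (hca : c ≠ a) (hcb : c ≠ b) (x : Fin n → Fin q) (v : Fin n) :
    markedSwapFDS D ρ a b c x v = c ↔ x (ρ.symm v) = c := by
  unfold markedSwapFDS
  split_ifs
  · rw [Equiv.swap_apply_eq_iff, Equiv.swap_apply_of_ne_of_ne hca hcb]
  · rfl

theorem markedSwapFDS_injective (hca : c ≠ a) (hcb : c ≠ b) :
    Injective (markedSwapFDS D ρ a b c) := by
  intro x y hxy
  have hmark (u : Fin n) : x u = c ↔ y u = c := by
    simpa [markedSwapFDS_eq_iff hca hcb] using congrArg (· = c) (congrFun hxy (ρ u))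
  funext u
  have hcond : (∀ w, D w (ρ u) → w ≠ u → x w = c) ↔ (∀ w, D w (ρ u) → w ≠ u → y w = c) := by
    simp only [hmark]
  have hu := congrFun hxy (ρ u)
  rw [markedSwapFDS, markedSwapFDS, ρ.symm_apply_apply] at hu
  by_cases h : ∀ w, D w (ρ u) → w ≠ u → x w = c
  · rw [if_pos h, if_pos (hcond.1 h)] at hu
    exact (Equiv.swap a b).injective hu
  · rwa [if_neg h, if_neg (mt hcond.2 h)] at hu

theorem markedSwapFDS_subIG (hρ : ∀ v, D v (ρ v)) : SubIG D (markedSwapFDS D ρ a b c) := by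
  classical
  rintro u v ⟨x, y, hxy, hne⟩
  by_contra huv
  have hpred : ρ.symm v ≠ u := fun h => huv (by simpa [← h] using hρ (ρ.symm v))
  have hcond : (∀ w, D w v → w ≠ ρ.symm v → x w = c) ↔
      (∀ w, D w v → w ≠ ρ.symm v → y w = c) :=
    forall_congr' fun w => imp_congr_right fun hw => by
      rw [hxy w fun h => huv (h ▸ hw)]
  rw [markedSwapFDS, markedSwapFDS, hxy _ hpred] at hne
  exact hne (if_congr hcond rfl rfl)

theorem IG_markedSwapFDS_of_rel (hab : a ≠ b) (hca : c ≠ a) (hcb : c ≠ b) {u v : Fin n}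
    (huv : D u v) : IG (markedSwapFDS D ρ a b c) u v := by
  set x := update (fun _ => c) (ρ.symm v) a with hxdef
  have hx : markedSwapFDS D ρ a b c x v = b := by
    rw [markedSwapFDS, if_pos fun w _ hw => update_of_ne hw _ _, hxdef, update_self,
      Equiv.swap_apply_left]
  by_cases hu : u = ρ.symm v
  · refine ⟨x, fun _ => c, fun w hw => update_of_ne (hu ▸ hw) _ _, ?_⟩
    rw [hx, markedSwapFDS, if_pos fun _ _ _ => rfl, Equiv.swap_apply_of_ne_of_ne hca hcb]
    exact hcb.symm
  · refine ⟨x, update x u a, fun w hw => (update_of_ne hw _ _).symm, ?_⟩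
    have hfail : ¬ ∀ w, D w v → w ≠ ρ.symm v → update x u a w = c := fun h =>
      hca (by simpa using (h u huv hu).symm)
    rw [hx, markedSwapFDS, if_neg hfail, update_of_ne (Ne.symm hu), hxdef, update_self]
    exact hab.symm

end markedSwapFDS

theorem exists_bijective_exactIG_of_perm (hq : 3 ≤ q) {D : Fin n → Fin n → Prop}
    {ρ : Equiv.Perm (Fin n)} (hρ : ∀ v, D v (ρ v)) :
    ∃ f : (Fin n → Fin q) → Fin n → Fin q, ExactIG D f ∧ Bijective f := by
  let a : Fin q := ⟨0, by omega⟩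
  let b : Fin q := ⟨1, by omega⟩
  let c : Fin q := ⟨2, by omega⟩
  have hab : a ≠ b := by simp [a, b, Fin.ext_iff]
  have hca : c ≠ a := by simp [a, c, Fin.ext_iff]
  have hcb : c ≠ b := by simp [b, c, Fin.ext_iff]
  exact ⟨markedSwapFDS D ρ a b c,
    fun u v => ⟨markedSwapFDS_subIG hρ u v, IG_markedSwapFDS_of_rel hab hca hcb⟩,
    Finite.injective_iff_bijective.1 (markedSwapFDS_injective hca hcb)⟩

end

theorem reversible_parallel_general {n q : ℕ} (hq : 3 ≤ q)
    (D : Fin n → Fin n → Prop) :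
    (∃ f : (Fin n → Fin q) → Fin n → Fin q, ExactIG D f ∧ Function.Bijective f) ↔
      CoveredByDisjointCycles D := by
  constructor
  · rintro ⟨f, hf, hbij⟩
    obtain ⟨ρ, hρ⟩ := exists_perm_of_surjective (by omega) (fun u v => (hf u v).1) hbij.2
    exact coveredByDisjointCycles_of_perm ρ hρ
  · intro h
    obtain ⟨ρ, hρ⟩ := exists_perm_of_coveredByDisjointCycles h
    exact exists_bijective_exactIG_of_perm hq hρ

/-- for `q ≥ 3`, there is a permutation in `F[D,q]` iff all vertices of `D`
can be covered by pairwise vertex-disjoint cycles. -/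
theorem reversible_parallel {n q : ℕ} (hn : 1 ≤ n) (hq : 3 ≤ q)
    (D : Fin n → Fin n → Prop) :
    (∃ f : (Fin n → Fin q) → Fin n → Fin q, ExactIG D f ∧ Function.Bijective f) ↔
      CoveredByDisjointCycles D :=
  reversible_parallel_general hq D
end

section
/- Let D be a digraph on vertex set V = {1,…,n}, let q ≥ 2, let σ be a block-sequential schedule and let f ∈ F[D,q]. Then |Im(f^σ)| ≤ q^{α_1(D)}. -/
open Function

/-!
Call `(A, B)` a cover of `D` if every arc `u → v` has `u ∈ A` or `v ∈ B`. For a block-sequential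
schedule, `f^σ(x)` is determined by `x` on `A` and `f^σ(x)` on `B`: a vertex `v ∉ B` is updated
exactly once, and at that moment every in-neighbour `u` of `v` lies in `A` and holds either `x_u`
or its final value. Hence `|Im f^σ| ≤ q ^ (|A| + |B|)`. Independent 1-walks are the matchings of
the bipartite double cover of `D`, so König's theorem provides a cover with
`|A| + |B| ≤ α_1(D)`.
-/

open Finset

section Konig

variable {α β : Type*} [Fintype α] [Fintype β] [DecidableEq β]

theorem exists_matching_of_injective_sum {γ : Type*} [Fintype γ] {F : α → β ⊕ γ}
    (hF : Function.Injective F) :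
    ∃ (k : ℕ) (a : Fin k → α) (b : Fin k → β), Function.Injective a ∧ Function.Injective b ∧
      (∀ i, F (a i) = .inl (b i)) ∧ Fintype.card α ≤ k + Fintype.card γ := by
  classical
  let P : Finset (α × β) := univ.filter fun p => F p.1 = .inl p.2
  let e := P.equivFin.symm
  have hP : ∀ i, F (e i).1.1 = .inl (e i).1.2 := fun i => (mem_filter.mp (e i).2).2
  refine ⟨#P, fun i => (e i).1.1, fun i => (e i).1.2, fun i j h => ?_, fun i j h => ?_, hP, ?_⟩
  · have hb : (e i).1.2 = (e j).1.2 := Sum.inl_injective (by rw [← hP, ← hP]; exact congrArg F h)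
    exact e.injective (Subtype.ext (Prod.ext h hb))
  · have ha : (e i).1.1 = (e j).1.1 := hF (by rw [hP, hP]; exact congrArg Sum.inl h)
    exact e.injective (Subtype.ext (Prod.ext ha h))
  · have hsub : univ.image F ⊆ P.image (Sum.inl ∘ Prod.snd) ∪ univ.image Sum.inr := by
      intro x hx
      obtain ⟨u, -, rfl⟩ := mem_image.mp hx
      rcases hu : F u with y | j
      · exact mem_union_left _ (mem_image.mpr ⟨(u, y), by simp [P, hu], rfl⟩)
      · exact mem_union_right _ (mem_image_of_mem _ (mem_univ j))
    calc Fintype.card α = #(univ.image F) := by rw [card_image_of_injective _ hF, card_univ]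
      _ ≤ #(P.image (Sum.inl ∘ Prod.snd)) + #(univ.image (Sum.inr : γ → β ⊕ γ)) :=
        (card_le_card hsub).trans (card_union_le _ _)
      _ ≤ #P + Fintype.card γ := add_le_add card_image_le card_image_le

theorem exists_matching_of_card_le_biUnion_card_add (t : α → Finset β) (d : ℕ)
    (ht : ∀ s : Finset α, #s ≤ #(s.biUnion t) + d) :
    ∃ (k : ℕ) (a : Fin k → α) (b : Fin k → β), Function.Injective a ∧ Function.Injective b ∧
      (∀ i, b i ∈ t (a i)) ∧ Fintype.card α ≤ k + d := by
  -- Hall's theorem after adding `d` new vertices adjacent to every vertex of `α`.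
  let t' : α → Finset (β ⊕ Fin d) := fun u => (t u).map .inl ∪ univ.map .inr
  have hall : ∀ s : Finset α, #s ≤ #(s.biUnion t') := by
    intro s
    rcases s.eq_empty_or_nonempty with rfl | ⟨u, hu⟩
    · simp
    have hsub : (s.biUnion t).map .inl ∪ univ.map .inr ⊆ s.biUnion t' := by
      intro x hx
      simp only [t', mem_union, mem_map, mem_biUnion, mem_univ, true_and] at hx ⊢
      rcases hx with ⟨y, ⟨v, hv, hy⟩, rfl⟩ | ⟨j, rfl⟩
      · exact ⟨v, hv, .inl ⟨y, hy, rfl⟩⟩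
      · exact ⟨u, hu, .inr ⟨j, rfl⟩⟩
    have hdisj : Disjoint ((s.biUnion t).map .inl) (univ.map (.inr : Fin d ↪ β ⊕ Fin d)) := by
      simp [disjoint_left]
    calc #s ≤ #(s.biUnion t) + d := ht s
      _ = #((s.biUnion t).map .inl ∪ univ.map .inr) := by simp [card_union_of_disjoint hdisj]
      _ ≤ #(s.biUnion t') := card_le_card hsub
  obtain ⟨F, hF, hFt⟩ := (all_card_le_biUnion_card_iff_exists_injective t').mp hall
  obtain ⟨k, a, b, ha, hb, hab, hk⟩ := exists_matching_of_injective_sum hF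
  refine ⟨k, a, b, ha, hb, fun i => ?_, by simpa using hk⟩
  simpa [t', hab] using hFt (a i)

/-- König's theorem, in the form: some cover of the bipartite relation `r` is no larger than
some matching of `r`. -/
theorem exists_cover_card_le_matching (r : α → β → Prop) :
    ∃ (A : Finset α) (B : Finset β) (k : ℕ) (a : Fin k → α) (b : Fin k → β),
      (∀ u v, r u v → u ∈ A ∨ v ∈ B) ∧ Function.Injective a ∧ Function.Injective b ∧
      (∀ i, r (a i) (b i)) ∧ #A + #B ≤ k := by
  classical
  let t : α → Finset β := fun u => univ.filter (r u)
  -- A set `S` of maximal deficiency `#S - #N(S)` gives the cover `(Sᶜ, N(S))`.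
  obtain ⟨S, -, hS⟩ := exists_max_image univ.powerset
    (fun S : Finset α => (#S : ℤ) - #(S.biUnion t)) ⟨∅, empty_mem_powerset _⟩
  have hdef : ∀ s : Finset α, (#s : ℤ) - #(s.biUnion t) ≤ #S - #(S.biUnion t) :=
    fun s => hS s (mem_powerset.mpr (subset_univ s))
  have hS0 := hdef ∅
  simp only [card_empty, biUnion_empty, Nat.cast_zero, sub_zero] at hS0
  obtain ⟨k, a, b, ha, hb, hab, hk⟩ :=
    exists_matching_of_card_le_biUnion_card_add t (#S - #(S.biUnion t)) fun s => by
      have := hdef s; omega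
  refine ⟨Sᶜ, S.biUnion t, k, a, b, fun u v huv => ?_, ha, hb,
    fun i => (mem_filter.mp (hab i)).2, ?_⟩
  · by_cases hu : u ∈ S
    · exact .inr (mem_biUnion.mpr ⟨u, hu, mem_filter.mpr ⟨mem_univ v, huv⟩⟩)
    · exact .inl (mem_compl.mpr hu)
  · rw [card_compl]
    have := card_le_univ S
    omega

end Konig

theorem le_alphaWalks_one {n k : ℕ} {D : Fin n → Fin n → Prop} {a b : Fin k → Fin n}
    (ha : Function.Injective a) (hb : Function.Injective b) (hab : ∀ i, D (a i) (b i)) :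
    k ≤ alphaWalks D 1 := by
  refine le_csSup ⟨n, ?_⟩ ⟨fun i => ![a i, b i], fun i s => ?_, fun i j hij s => ?_⟩
  · rintro m ⟨W, -, hW⟩
    simpa using Fintype.card_le_of_injective (fun i => W i 0)
      fun i j h => by_contra fun hij => hW i j hij 0 h
  · fin_cases s
    exact hab i
  · fin_cases s
    · exact ha.ne hij
    · exact hb.ne hij

section Schedule

variable {n q : ℕ} (f : (Fin n → Fin q) → Fin n → Fin q)

theorem foldl_applyBlock_comp (σ : List (Finset (Fin n))) (g : (Fin n → Fin q) → Fin n → Fin q) :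
    σ.foldl (fun g S => applyBlock f S ∘ g) g = applySchedule f σ ∘ g := by
  induction σ generalizing g with
  | nil => rfl
  | cons S σ ih => rw [List.foldl_cons, ih]; exact congrArg (· ∘ g) (ih _).symm

theorem applySchedule_cons (S : Finset (Fin n)) (σ : List (Finset (Fin n))) :
    applySchedule f (S :: σ) = applySchedule f σ ∘ applyBlock f S :=
  foldl_applyBlock_comp f σ _

theorem applySchedule_apply_of_forall_notMem {σ : List (Finset (Fin n))} {v : Fin n}
    (hv : ∀ S ∈ σ, v ∉ S) (x : Fin n → Fin q) : applySchedule f σ x v = x v := by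
  induction σ generalizing x with
  | nil => rfl
  | cons S σ ih =>
    rw [applySchedule_cons, comp_apply, ih fun T hT => hv T (List.mem_cons_of_mem S hT),
      applyBlock, if_neg (hv S List.mem_cons_self)]

theorem apply_eq_of_forall_IG {v : Fin n} {z z' : Fin n → Fin q}
    (h : ∀ u, IG f u v → z u = z' u) : f z v = f z' v := by
  classical
  suffices ∀ s : Finset (Fin n), ∀ z, (∀ u, IG f u v → z u = z' u) → (∀ u ∉ s, z u = z' u) →
      f z v = f z' v from this univ z h (by simp)
  intro s
  induction s using Finset.induction_on with
  | empty => intro z _ hz; rw [funext fun u => hz u (notMem_empty u)]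
  | insert a s _ ih =>
    intro z h hz
    have hstep : f z v = f (update z a (z' a)) v := by
      by_contra hne
      have ha : z a = z' a := h a ⟨z, _, fun w hw => (update_of_ne hw _ _).symm, hne⟩
      rw [← ha, update_eq_self] at hne
      exact hne rfl
    rw [hstep]
    refine ih _ (fun u hu => ?_) (fun u hu => ?_) <;> rcases eq_or_ne u a with rfl | hua
    · simp
    · rw [update_of_ne hua]; exact h u hu
    · simp
    · rw [update_of_ne hua]; exact hz u (by simp [hua, hu])

theorem applySchedule_eq_of_cover {D : Fin n → Fin n → Prop} (hf : SubIG D f)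
    {A B : Finset (Fin n)} (hcover : ∀ u v, D u v → u ∈ A ∨ v ∈ B)
    {σ : List (Finset (Fin n))} (hσ : σ.Pairwise Disjoint) {x x' : Fin n → Fin q}
    (hx : ∀ u, (u ∈ A ∨ ∀ S ∈ σ, u ∉ S) → x u = x' u)
    (hB : ∀ v ∈ B, applySchedule f σ x v = applySchedule f σ x' v) :
    applySchedule f σ x = applySchedule f σ x' := by
  induction σ generalizing x x' with
  | nil => exact funext fun u => hx u (.inr fun S hS => absurd hS List.not_mem_nil)
  | cons S σ ih =>
    rw [List.pairwise_cons] at hσ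
    simp only [applySchedule_cons, comp_apply] at hB ⊢
    -- After block `S` an updated `u ∈ B` already holds its final value, and an updated `u ∉ B`
    -- reads only vertices of `A`, so the invariant `hx` survives.
    refine ih hσ.2 (fun u hu => ?_) hB
    by_cases huS : u ∈ S
    · have hu' : ∀ T ∈ σ, u ∉ T := fun T hT => disjoint_left.mp (hσ.1 T hT) huS
      by_cases huB : u ∈ B
      · simpa [applySchedule_apply_of_forall_notMem f hu'] using hB u huB
      · simp only [applyBlock, if_pos huS]
        exact apply_eq_of_forall_IG f fun w hw =>
          hx w (.inl ((hcover w u (hf w u hw)).resolve_right huB))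
    · simp only [applyBlock, if_neg huS]
      exact hx u (hu.imp_right fun h => List.forall_mem_cons.mpr ⟨huS, h⟩)

end Schedule

theorem card_range_le_of_determined {ι κ α : Type*} [Finite α] (g : (ι → α) → κ → α)
    (A : Finset ι) (B : Finset κ)
    (hg : ∀ x x', (∀ u ∈ A, x u = x' u) → (∀ v ∈ B, g x v = g x' v) → g x = g x') :
    Nat.card (Set.range g) ≤ Nat.card α ^ (#A + #B) := by
  let Φ : Set.range g → (A → α) × (B → α) := fun y => (fun u => y.2.choose u, fun v => y.1 v)
  have hΦ : Function.Injective Φ := by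
    rintro ⟨y, hy⟩ ⟨y', hy'⟩ h
    simp only [Φ, Prod.mk.injEq, funext_iff, Subtype.forall] at h
    rw [Subtype.mk.injEq, ← hy.choose_spec, ← hy'.choose_spec]
    refine hg _ _ h.1 fun v hv => ?_
    rw [hy.choose_spec, hy'.choose_spec]
    exact h.2 v hv
  calc Nat.card (Set.range g) ≤ Nat.card ((A → α) × (B → α)) := Nat.card_le_card_of_injective Φ hΦ
    _ = Nat.card α ^ (#A + #B) := by simp [Nat.card_prod, Nat.card_fun, pow_add]

theorem max_rank_block_sequential_general {n q : ℕ} (hq : 2 ≤ q)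
    (D : Fin n → Fin n → Prop) (σ : List (Finset (Fin n))) (hσ : BlockSequential σ)
    (f : (Fin n → Fin q) → Fin n → Fin q) (hf : ExactIG D f) :
    Nat.card (Set.range (applySchedule f σ)) ≤ q ^ alphaWalks D 1 := by
  obtain ⟨A, B, k, a, b, hcover, ha, hb, hab, hk⟩ := exists_cover_card_le_matching D
  have hupdated : ∀ u, ¬ ∀ S ∈ σ, u ∉ S := fun u h => by
    obtain ⟨S, hS, huS⟩ := hσ.2 u
    exact h S hS huS
  have hdet : ∀ x x' : Fin n → Fin q, (∀ u ∈ A, x u = x' u) →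
      (∀ v ∈ B, applySchedule f σ x v = applySchedule f σ x' v) →
      applySchedule f σ x = applySchedule f σ x' := fun x x' hA hB =>
    applySchedule_eq_of_cover f (fun u v => (hf u v).mp) hcover hσ.1
      (fun u hu => hA u (hu.resolve_right (hupdated u))) hB
  calc Nat.card (Set.range (applySchedule f σ)) ≤ q ^ (#A + #B) := by
        simpa using card_range_le_of_determined _ A B hdet
    _ ≤ q ^ k := Nat.pow_le_pow_right (by omega) hk
    _ ≤ q ^ alphaWalks D 1 := Nat.pow_le_pow_right (by omega) (le_alphaWalks_one ha hb hab)

/-- for `q ≥ 2`, a block-sequential schedule `σ` and `f ∈ F[D,q]`,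
`|Im(f^σ)| ≤ q ^ α_1(D)`. -/
theorem max_rank_block_sequential {n q : ℕ} (hn : 1 ≤ n) (hq : 2 ≤ q)
    (D : Fin n → Fin n → Prop) (σ : List (Finset (Fin n))) (hσ : BlockSequential σ)
    (f : (Fin n → Fin q) → Fin n → Fin q) (hf : ExactIG D f) :
    Nat.card (Set.range (applySchedule f σ)) ≤ q ^ alphaWalks D 1 :=
  max_rank_block_sequential_general hq D σ hσ f hf
end

section
/- Let D be a digraph on vertex set V = {1,…,n} and let p ≥ n. Then α_p(D) = α_n(D) = max { Σ_{i=1}^r |C_i| }, where the maximum is taken over all families C_1,…,C_r of pairwise vertex-disjoint cycles of D and |C_i| denotes the number of vertices of C_i. -/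
open Function

/-
Call `A B : V → ℤ` a weighted cover if `A u + B v ≥ 1` along arcs and `A v + B v ≥ 0`, and let
`w = A + B`. Every cycle `C` has `|C| ≤ ∑_{v ∈ C} w v`, so every packing has size at most `∑ w`.
For a cover of least weight, Hall's theorem applied to the tight pairs gives a permutation `π`
whose moved points follow arcs, with `∑ w ≤ #{v | v → π v is an arc}` (Egerváry's min-max
theorem). The cycles of `π` together with its fixed loops form a packing of that size, and
iterating `π` from these vertices gives that many independent `p`-walks for every `p`.
Conversely `-B` is a potential, `y v + 1 ≤ y u + w u` along arcs, and replacing its values by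
their ranks makes it take values in `[0, n)`. Along a `p`-walk with `p ≥ n` the quantity
`y + time` then crosses the level `n` at some step `s` spent at a vertex `u` with
`n - y u - w u ≤ s < n - y u`. Independent walks cross at distinct pairs `(u, s)`, so there are
at most `∑ w` of them.
-/

open Equiv Finset
open scoped Classical

section Walks

variable {n p k : ℕ} {D : Fin n → Fin n → Prop}

def IsIndepWalks (D : Fin n → Fin n → Prop) (p : ℕ) (W : Fin k → Fin (p + 1) → Fin n) : Prop :=
  (∀ i, IsPWalk D p (W i)) ∧ ∀ i j, i ≠ j → ∀ s, W i s ≠ W j s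

theorem IsIndepWalks.card_le {W : Fin k → Fin (p + 1) → Fin n} (hW : IsIndepWalks D p W) :
    k ≤ n := by
  simpa using Fintype.card_le_of_injective (fun i => W i 0)
    fun i j h => by_contra fun hij => hW.2 i j hij 0 h

theorem le_alphaWalks {W : Fin k → Fin (p + 1) → Fin n} (hW : IsIndepWalks D p W) :
    k ≤ alphaWalks D p :=
  le_csSup ⟨n, fun _ ⟨_, hW'⟩ => IsIndepWalks.card_le hW'⟩ ⟨W, hW⟩

theorem alphaWalks_le_of_forall {m : ℕ}
    (h : ∀ k (W : Fin k → Fin (p + 1) → Fin n), IsIndepWalks D p W → k ≤ m) :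
    alphaWalks D p ≤ m :=
  csSup_le ⟨0, finZeroElim, finZeroElim, finZeroElim⟩ fun _ ⟨W, hW⟩ => h _ W hW

end Walks

section ArcPerm

variable {V : Type*} [Fintype V] {D : V → V → Prop} {π : Perm V}

def IsArcPerm (D : V → V → Prop) (π : Perm V) : Prop :=
  ∀ v, π v = v ∨ D v (π v)

noncomputable def arcSet (D : V → V → Prop) (π : Perm V) : Finset V :=
  univ.filter fun v => D v (π v)

theorem IsArcPerm.apply_mem_arcSet (hπ : IsArcPerm D π) {v : V} (hv : v ∈ arcSet D π) :
    π v ∈ arcSet D π := by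
  by_cases hfix : π v = v
  · rwa [hfix]
  · exact mem_filter.2 ⟨mem_univ _, (hπ (π v)).resolve_left fun h => hfix (π.injective h)⟩

theorem IsArcPerm.pow_apply_mem_arcSet (hπ : IsArcPerm D π) {v : V} (hv : v ∈ arcSet D π)
    (t : ℕ) : (π ^ t) v ∈ arcSet D π := by
  induction t with
  | zero => exact hv
  | succ t ih => rw [pow_succ', Perm.mul_apply]; exact hπ.apply_mem_arcSet ih

end ArcPerm

theorem IsArcPerm.card_arcSet_le_alphaWalks {n : ℕ} {D : Fin n → Fin n → Prop}
    {π : Perm (Fin n)} (hπ : IsArcPerm D π) (p : ℕ) : #(arcSet D π) ≤ alphaWalks D p := by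
  let e := (arcSet D π).equivFin.symm
  refine le_alphaWalks (W := fun i s => (π ^ (s : ℕ)) (e i)) ⟨fun i s => ?_, fun i j hij s h => ?_⟩
  · simp only [Fin.val_castSucc, Fin.val_succ, pow_succ', Perm.mul_apply]
    exact (mem_filter.1 (hπ.pow_apply_mem_arcSet (e i).2 s)).2
  · exact hij (e.injective (Subtype.ext ((π ^ (s : ℕ)).injective h)))

section Packing

variable {n : ℕ} {D : Fin n → Fin n → Prop}

def IsPacking (D : Fin n → Fin n → Prop) (Cs : List (List (Fin n))) : Prop :=
  (∀ c ∈ Cs, IsCycleList D c) ∧ Cs.Pairwise (fun a b => ∀ v ∈ a, v ∉ b)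

theorem isCycleList_iff {c : List (Fin n)} :
    IsCycleList D c ↔ c ≠ [] ∧ c.Nodup ∧ ∀ v ∈ c, D v (c.formPerm v) := by
  refine and_congr_right fun _ => and_congr_right fun hc => ⟨fun h v hv => ?_, fun h i => ?_⟩
  · obtain ⟨i, hi, rfl⟩ := List.mem_iff_getElem.1 hv
    simpa [List.formPerm_apply_getElem _ hc] using h ⟨i, hi⟩
  · simpa [List.formPerm_apply_getElem _ hc] using h _ (c.get_mem i)

theorem isCycleList_singleton {v : Fin n} (hv : D v v) : IsCycleList D [v] :=
  isCycleList_iff.2 ⟨by simp, by simp, by simpa using hv⟩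

theorem Equiv.Perm.IsCycle.isCycleList_toList {σ : Perm (Fin n)} (hσ : σ.IsCycle)
    (hD : ∀ v ∈ σ.support, D v (σ v)) {x : Fin n} (hx : x ∈ σ.support) :
    IsCycleList D (σ.toList x) := by
  refine isCycleList_iff.2 ⟨by simpa using hx, σ.nodup_toList x, fun v hv => ?_⟩
  rw [Perm.formPerm_toList, hσ.cycleOf_eq (Perm.mem_support.1 hx)]
  exact hD v ((Perm.mem_toList_iff.1 hv).1.mem_support_iff.1 hx)

theorem IsPacking.append {Cs Cs' : List (List (Fin n))} (h : IsPacking D Cs)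
    (h' : IsPacking D Cs') (hdisj : ∀ a ∈ Cs, ∀ b ∈ Cs', ∀ v ∈ a, v ∉ b) :
    IsPacking D (Cs ++ Cs') :=
  ⟨fun c hc => (List.mem_append.1 hc).elim (h.1 c) (h'.1 c),
    List.pairwise_append.2 ⟨h.2, h'.2, hdisj⟩⟩

theorem isPacking_loops {s : Finset (Fin n)} (hs : ∀ v ∈ s, D v v) :
    IsPacking D (s.toList.map fun v => [v]) := by
  refine ⟨?_, ?_⟩
  · simp only [List.mem_map, mem_toList]
    rintro _ ⟨v, hv, rfl⟩
    exact isCycleList_singleton (hs v hv)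
  · refine List.pairwise_map.2 ((nodup_toList s).imp fun hvw => ?_)
    simpa using hvw

theorem exists_isPacking_support (σ : Perm (Fin n)) (hD : ∀ v ∈ σ.support, D v (σ v)) :
    ∃ Cs, IsPacking D Cs ∧ (∀ c ∈ Cs, ∀ v ∈ c, v ∈ σ.support) ∧
      (Cs.map List.length).sum = #σ.support := by
  induction σ using Perm.cycle_induction_on with
  | base_one => exact ⟨[], ⟨by simp, by simp⟩, by simp, by simp⟩
  | base_cycles σ hσ =>
    obtain ⟨x, hx⟩ := hσ.nonempty_support
    refine ⟨[σ.toList x], ⟨by simpa using hσ.isCycleList_toList hD hx, by simp⟩, ?_, ?_⟩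
    · simp only [List.mem_singleton, forall_eq]
      exact fun v hv => (Perm.mem_toList_iff.1 hv).1.mem_support_iff.1 hx
    · simp [hσ.cycleOf_eq (Perm.mem_support.1 hx)]
  | induction_disjoint σ τ hστ _ ihσ ihτ =>
    have hσ_eq (v) (hv : v ∈ σ.support) : (σ * τ) v = σ v := by
      rw [Perm.mul_apply, (hστ v).resolve_left (Perm.mem_support.1 hv)]
    have hτ_eq (v) (hv : v ∈ τ.support) : (σ * τ) v = τ v :=
      (hστ (τ v)).resolve_right (Perm.mem_support.1 (Perm.apply_mem_support.2 hv))
    rw [hστ.support_mul] at hD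
    obtain ⟨Cσ, hCσ, hσsupp, hσlen⟩ := ihσ fun v hv => hσ_eq v hv ▸ hD v (mem_union_left _ hv)
    obtain ⟨Cτ, hCτ, hτsupp, hτlen⟩ := ihτ fun v hv => hτ_eq v hv ▸ hD v (mem_union_right _ hv)
    refine ⟨Cσ ++ Cτ, hCσ.append hCτ fun a ha b hb v hva hvb => ?_, ?_, ?_⟩
    · exact disjoint_left.1 hστ.disjoint_support (hσsupp a ha v hva) (hτsupp b hb v hvb)
    · simp only [List.mem_append, hστ.support_mul, mem_union]
      rintro c (hc | hc) v hv
      exacts [.inl (hσsupp c hc v hv), .inr (hτsupp c hc v hv)]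
    · rw [List.map_append, List.sum_append, hσlen, hτlen, hστ.card_support_mul]

theorem IsArcPerm.exists_isPacking_card_arcSet_le {π : Perm (Fin n)} (hπ : IsArcPerm D π) :
    ∃ Cs, IsPacking D Cs ∧ #(arcSet D π) ≤ (Cs.map List.length).sum := by
  set loops := univ.filter fun v => π v = v ∧ D v v
  obtain ⟨Cs, hCs, hCs_supp, hCs_len⟩ :=
    exists_isPacking_support π fun v hv => (hπ v).resolve_left (Perm.mem_support.1 hv)
  refine ⟨(loops.toList.map fun v => [v]) ++ Cs,
    (isPacking_loops fun v hv => (mem_filter.1 hv).2.2).append hCs ?_, ?_⟩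
  · simp only [List.mem_map, mem_toList]
    rintro _ ⟨v, hv, rfl⟩ c hc w hw hwc
    rw [List.mem_singleton.1 hw] at hwc
    exact Perm.mem_support.1 (hCs_supp c hc v hwc) (mem_filter.1 hv).2.1
  · calc #(arcSet D π) ≤ #(loops ∪ π.support) := by
          refine card_le_card fun v hv => ?_
          by_cases hfix : π v = v
          · have hD := (mem_filter.1 hv).2
            rw [hfix] at hD
            exact mem_union_left _ (mem_filter.2 ⟨mem_univ _, hfix, hD⟩)
          · exact mem_union_right _ (Perm.mem_support.2 hfix)
      _ ≤ #loops + #π.support := card_union_le _ _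
      _ = _ := by simp [hCs_len]

end Packing

section Cover

variable {V : Type*} [Fintype V] {D : V → V → Prop} {A B : V → ℤ}

def IsWeightedCover (D : V → V → Prop) (A B : V → ℤ) : Prop :=
  (∀ u v, D u v → 1 ≤ A u + B v) ∧ ∀ v, 0 ≤ A v + B v

noncomputable def tightSet (D : V → V → Prop) (A B : V → ℤ) (u : V) : Finset V :=
  univ.filter fun v => (D u v ∧ A u + B v ≤ 1) ∨ (u = v ∧ A u + B v ≤ 0)

theorem IsWeightedCover.shift (h : IsWeightedCover D A B) (s : Finset V) :
    IsWeightedCover D (fun v => A v - if v ∈ s then 1 else 0)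
      (fun v => B v + if v ∈ s.biUnion (tightSet D A B) then 1 else 0) := by
  have htight : ∀ u ∈ s, ∀ v, (D u v ∧ A u + B v ≤ 1) ∨ (u = v ∧ A u + B v ≤ 0) →
      v ∈ s.biUnion (tightSet D A B) := fun u hu v huv =>
    mem_biUnion.2 ⟨u, hu, mem_filter.2 ⟨mem_univ _, huv⟩⟩
  refine ⟨fun u v huv => ?_, fun v => ?_⟩
  · have := h.1 u v huv
    have : u ∈ s → A u + B v ≤ 1 → v ∈ s.biUnion (tightSet D A B) :=
      fun hu ht => htight u hu v (.inl ⟨huv, ht⟩)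
    grind
  · have := h.2 v
    have : v ∈ s → A v + B v ≤ 0 → v ∈ s.biUnion (tightSet D A B) :=
      fun hv ht => htight v hv v (.inr ⟨rfl, ht⟩)
    grind

/-- If Hall's condition failed at `s`, then `h.shift s` would be a cover of smaller weight. -/
theorem IsWeightedCover.card_le_card_biUnion_tightSet (h : IsWeightedCover D A B)
    (hmin : ∀ A' B', IsWeightedCover D A' B' → ∑ v, (A v + B v) ≤ ∑ v, (A' v + B' v))
    (s : Finset V) : #s ≤ #(s.biUnion (tightSet D A B)) := by
  have := hmin _ _ (h.shift s)
  simp only [sub_add_eq_add_sub, sum_sub_distrib, sum_add_distrib,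
    sum_boole, filter_mem_eq_inter, univ_inter] at this
  omega

theorem exists_isWeightedCover_forall_sum_le (D : V → V → Prop) :
    ∃ A B, IsWeightedCover D A B ∧
      ∀ A' B', IsWeightedCover D A' B' → ∑ v, (A v + B v) ≤ ∑ v, (A' v + B' v) := by
  obtain ⟨_, ⟨A, B, hAB, rfl⟩, hmin⟩ :=
    Int.exists_least_of_bdd (P := fun m => ∃ A B, IsWeightedCover D A B ∧ ∑ v, (A v + B v) = m)
      ⟨0, by rintro _ ⟨A, B, h, rfl⟩; exact sum_nonneg fun v _ => h.2 v⟩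
      ⟨_, 1, 0, ⟨by simp, by simp⟩, rfl⟩
  exact ⟨A, B, hAB, fun A' B' h' => hmin _ ⟨A', B', h', rfl⟩⟩

theorem exists_isWeightedCover_sum_le_card_arcSet (D : V → V → Prop) :
    ∃ A B, IsWeightedCover D A B ∧
      ∃ π, IsArcPerm D π ∧ ∑ v, (A v + B v) ≤ #(arcSet D π) := by
  obtain ⟨A, B, hAB, hmin⟩ := exists_isWeightedCover_forall_sum_le D
  obtain ⟨f, hf, hft⟩ := (all_card_le_biUnion_card_iff_exists_injective _).1
    (hAB.card_le_card_biUnion_tightSet hmin)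
  let π := Equiv.ofBijective f (Finite.injective_iff_bijective.1 hf)
  have hπ : ∀ v, (D v (π v) ∧ A v + B (π v) ≤ 1) ∨ (v = π v ∧ A v + B (π v) ≤ 0) :=
    fun v => (mem_filter.1 (hft v)).2
  refine ⟨A, B, hAB, π, fun v => (hπ v).symm.imp (fun h => h.1.symm) And.left, ?_⟩
  calc ∑ v, (A v + B v) = ∑ v, (A v + B (π v)) := by
        rw [sum_add_distrib, sum_add_distrib, Equiv.sum_comp π B]
    _ ≤ ∑ v, if D v (π v) then 1 else 0 := sum_le_sum fun v _ => by
        rcases hπ v with h | h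
        · simpa [h.1] using h.2
        · split_ifs <;> omega
    _ = #(arcSet D π) := by rw [arcSet, natCast_card_filter]

end Cover

section WeakDuality

variable {n : ℕ} {D : Fin n → Fin n → Prop} {A B : Fin n → ℤ}

theorem IsWeightedCover.length_le_sum (h : IsWeightedCover D A B) {c : List (Fin n)}
    (hc : IsCycleList D c) : (c.length : ℤ) ≤ ∑ v ∈ c.toFinset, (A v + B v) := by
  obtain ⟨-, hnd, hD⟩ := isCycleList_iff.1 hc
  calc (c.length : ℤ) = ∑ v ∈ c.toFinset, 1 := by simp [List.toFinset_card_of_nodup hnd]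
    _ ≤ ∑ v ∈ c.toFinset, (A v + B (c.formPerm v)) :=
        sum_le_sum fun v hv => h.1 _ _ (hD v (List.mem_toFinset.1 hv))
    _ = ∑ v ∈ c.toFinset, (A v + B v) := by
        rw [sum_add_distrib, sum_add_distrib,
          Perm.sum_comp _ _ _ (List.support_formPerm_le' c)]

theorem IsWeightedCover.sum_length_le (h : IsWeightedCover D A B) {Cs : List (List (Fin n))}
    (hCs : IsPacking D Cs) : ((Cs.map List.length).sum : ℤ) ≤ ∑ v, (A v + B v) := by
  refine le_trans ?_ (sum_le_univ_sum_of_nonneg (s := Cs.flatten.toFinset) h.2)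
  induction Cs with
  | nil => simp
  | cons c Cs ih =>
    obtain ⟨hdisj, hCs'⟩ := List.pairwise_cons.1 hCs.2
    rw [List.flatten_cons, List.toFinset_append, sum_union, List.map_cons, List.sum_cons,
      Nat.cast_add]
    · exact add_le_add (h.length_le_sum (hCs.1 c (by simp)))
        (ih ⟨fun c' hc' => hCs.1 c' (by simp [hc']), hCs'⟩)
    · refine disjoint_left.2 fun v hvc hvCs => ?_
      obtain ⟨c', hc', hvc'⟩ := List.mem_flatten.1 (List.mem_toFinset.1 hvCs)
      exact hdisj c' hc' v (List.mem_toFinset.1 hvc) hvc'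

end WeakDuality

section Potential

variable {V : Type*} {D : V → V → Prop} {w y : V → ℤ}

def IsPotential (D : V → V → Prop) (w y : V → ℤ) : Prop :=
  ∀ u v, D u v → y v + 1 ≤ y u + w u

theorem IsWeightedCover.isPotential {A B : V → ℤ} (h : IsWeightedCover D A B) :
    IsPotential D (fun v => A v + B v) (fun v => -B v) :=
  fun u v huv => by dsimp only; have := h.1 u v huv; omega

theorem IsPotential.exists_lt_card [Fintype V] (hw : ∀ v, 0 ≤ w v) (hy : IsPotential D w y) :
    ∃ y' : V → ℤ, IsPotential D w y' ∧ ∀ v, 0 ≤ y' v ∧ y' v < Fintype.card V := by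
  set values := univ.image y
  let rank : ℤ → ℕ := fun a => #(values.filter (· < a))
  have rank_lt {a b : ℤ} (ha : a ∈ values) (hab : a < b) : rank a < rank b :=
    card_lt_card <| (ssubset_iff_of_subset fun x hx =>
      mem_filter.2 ⟨(mem_filter.1 hx).1, (mem_filter.1 hx).2.trans hab⟩).2
      ⟨a, by simpa using ⟨ha, hab⟩, by simp⟩
  have rank_le (a b : ℤ) : rank b ≤ rank a + #(Ico a b) :=
    (card_le_card fun x hx => by by_cases x < a <;> simp_all).trans (card_union_le _ _)
  refine ⟨fun v => rank (y v), fun u v huv => ?_, fun v => ⟨by positivity, ?_⟩⟩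
  · have := hy u v huv
    dsimp only
    rcases lt_or_ge (y v) (y u) with hlt | hge
    · have := rank_lt (mem_image_of_mem y (mem_univ v)) hlt
      have := hw u
      omega
    · have := rank_le (y u) (y v)
      rw [Int.card_Ico] at this
      omega
  · calc (rank (y v) : ℤ) < #values := by
          exact_mod_cast card_lt_card ((filter_ssubset (p := (· < y v))).2
            ⟨y v, mem_image_of_mem y (mem_univ v), lt_irrefl _⟩)
      _ ≤ Fintype.card V := by exact_mod_cast card_image_le.trans (card_univ (α := V)).le

end Potential

theorem Fin.exists_castSucc_lt_le_succ {p : ℕ} {f : Fin (p + 1) → ℤ} {a : ℤ} (h0 : f 0 < a)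
    (hlast : a ≤ f (Fin.last p)) : ∃ s : Fin p, f s.castSucc < a ∧ a ≤ f s.succ := by
  induction p with
  | zero => exact absurd hlast (not_le.2 h0)
  | succ p ih =>
    by_cases h : a ≤ f (Fin.last p).castSucc
    · obtain ⟨s, hs⟩ := ih (f := f ∘ Fin.castSucc) h0 h
      exact ⟨s.castSucc, by rw [Fin.succ_castSucc]; exact hs⟩
    · exact ⟨Fin.last p, not_le.1 h, by simpa using hlast⟩

section Cut

variable {n p : ℕ} {D : Fin n → Fin n → Prop} {w y : Fin n → ℤ} {N : ℕ}

theorem IsPotential.exists_crossing (hy : IsPotential D w y)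
    (hy_range : ∀ v, 0 ≤ y v ∧ y v < N) (hN : N ≤ p) {γ : Fin (p + 1) → Fin n}
    (hγ : IsPWalk D p γ) :
    ∃ s : Fin p, y (γ s.castSucc) + s < N ∧ N ≤ y (γ s.castSucc) + w (γ s.castSucc) + s := by
  obtain ⟨s, h1, h2⟩ := Fin.exists_castSucc_lt_le_succ (f := fun t => y (γ t) + t) (a := N)
    (by simpa using (hy_range (γ 0)).2)
    (by have := (hy_range (γ (Fin.last p))).1; simp only [Fin.val_last]; omega)
  have := hy _ _ (hγ s)
  simp only [Fin.val_castSucc, Fin.val_succ] at h1 h2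
  exact ⟨s, h1, by push_cast at h2; omega⟩

theorem IsPotential.card_le_sum (hw : ∀ v, 0 ≤ w v) (hy : IsPotential D w y)
    (hy_range : ∀ v, 0 ≤ y v ∧ y v < N) (hN : N ≤ p) {k : ℕ}
    {W : Fin k → Fin (p + 1) → Fin n} (hW : IsIndepWalks D p W) : (k : ℤ) ≤ ∑ v, w v := by
  choose s hs using fun i => hy.exists_crossing hy_range hN (hW.1 i)
  let cut := univ.sigma fun u => Ico ((N : ℤ) - y u - w u) (N - y u)
  let f : Fin k → Σ _ : Fin n, ℤ := fun i => ⟨W i (s i).castSucc, s i⟩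
  have hf_maps : ∀ i ∈ univ, f i ∈ cut := fun i _ => by
    simp only [cut, f, mem_sigma, mem_univ, mem_Ico, true_and]
    have := hs i
    omega
  have hf_inj : Set.InjOn f (univ : Finset (Fin k)) := by
    intro i _ j _ hij
    simp only [f, Sigma.mk.injEq, heq_eq_eq, Nat.cast_inj, Fin.val_inj] at hij
    obtain ⟨hW_eq, hs_eq⟩ := hij
    by_contra hne
    exact hW.2 i j hne _ (hs_eq ▸ hW_eq)
  calc (k : ℤ) = #(univ : Finset (Fin k)) := by simp
    _ ≤ #cut := by exact_mod_cast card_le_card_of_injOn f hf_maps hf_inj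
    _ = ∑ v, w v := by
      rw [card_sigma, Nat.cast_sum]
      exact sum_congr rfl fun u _ => by rw [Int.card_Ico]; have := hw u; omega

end Cut

theorem IsWeightedCover.alphaWalks_le {n p : ℕ} {D : Fin n → Fin n → Prop} {A B : Fin n → ℤ}
    (h : IsWeightedCover D A B) (hp : n ≤ p) : (alphaWalks D p : ℤ) ≤ ∑ v, (A v + B v) := by
  obtain ⟨y, hy, hy_bound⟩ := h.isPotential.exists_lt_card h.2
  have hcut : alphaWalks D p ≤ (∑ v, (A v + B v)).toNat :=
    alphaWalks_le_of_forall fun k W hW => by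
      have := hy.card_le_sum h.2 (N := n) (by simpa using hy_bound) hp hW
      omega
  have : 0 ≤ ∑ v, (A v + B v) := sum_nonneg fun v _ => h.2 v
  omega

theorem alpha_stabilises_general {n p : ℕ} (hp : n ≤ p) (D : Fin n → Fin n → Prop) :
    alphaWalks D p = alphaWalks D n ∧
    IsGreatest {m : ℕ | ∃ Cs : List (List (Fin n)),
        (∀ c ∈ Cs, IsCycleList D c) ∧
        Cs.Pairwise (fun a b => ∀ v ∈ a, v ∉ b) ∧
        m = (Cs.map List.length).sum}
      (alphaWalks D p) := by
  obtain ⟨A, B, hAB, π, hπ, hcover⟩ := exists_isWeightedCover_sum_le_card_arcSet D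
  obtain ⟨Cs, hCs, hCs_len⟩ := hπ.exists_isPacking_card_arcSet_le
  have hα (q : ℕ) (hq : n ≤ q) : alphaWalks D q = #(arcSet D π) := by
    have := hAB.alphaWalks_le hq
    have := hπ.card_arcSet_le_alphaWalks q
    omega
  have hle (Cs' : List (List (Fin n))) (h : IsPacking D Cs') :
      (Cs'.map List.length).sum ≤ #(arcSet D π) := by
    have := hAB.sum_length_le h
    omega
  refine ⟨by rw [hα p hp, hα n le_rfl], ⟨Cs, hCs.1, hCs.2, ?_⟩, ?_⟩
  · rw [hα p hp]
    exact le_antisymm hCs_len (hle Cs hCs)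
  · rintro _ ⟨Cs', h₁, h₂, rfl⟩
    rw [hα p hp]
    exact hle Cs' ⟨h₁, h₂⟩

/-- for `p ≥ n`, `α_p(D) = α_n(D)` and both equal the maximum of `Σ |C_i|`
over all families of pairwise vertex-disjoint cycles of `D`. -/
theorem alpha_stabilises {n p : ℕ} (hn : 1 ≤ n) (hp : n ≤ p) (D : Fin n → Fin n → Prop) :
    alphaWalks D p = alphaWalks D n ∧
    IsGreatest {m : ℕ | ∃ Cs : List (List (Fin n)),
        (∀ c ∈ Cs, IsCycleList D c) ∧
        Cs.Pairwise (fun a b => ∀ v ∈ a, v ∉ b) ∧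
        m = (Cs.map List.length).sum}
      (alphaWalks D p) :=
  alpha_stabilises_general hp D
end
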